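/- arXiv:2603.24794 — 2 statements merged into one kernel-verified Lean document; each statement's English description precedes it below -/
import Mathlib

section
/- Let L be a Lie algebra over a field of characteristic zero and let a, b, c, d, g be elements of L satisfying [a,b] = c, [a,c] = d, and [a,d] = g, with all other brackets among a, b, c, d, g equal to 0. Then for all nonnegative integers t and u, in the universal enveloping algebra U(L) one has a^t b^u = \sum_{k_1,k_2,k_3 \ge 0,\ k_1+k_2+k_3 \le u,\ k_1+2k_2+3k_3 \le t} \binom{u}{k_1+k_2+k_3} \binom{t}{k_1+2k_2+3k_3} \frac{(k_1+k_2+k_3)!\,(k_1+2k_2+3k_3)!}{(2!)^{k_2}(3!)^{k_3}\, k_3!\, k_2!\, k_1!} \, g^{k_3} d^{k_2} c^{k_1} b^{u-k_1-k_2-k_3} a^{t-k_1-2k_2-3k_3}. -/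
/-! Since `ad a` maps `b ↦ c ↦ d ↦ g ↦ 0`, one has
`a^t b = b a^t + t c a^(t-1) + C(t,2) d a^(t-2) + C(t,3) g a^(t-3)`. Writing
`a^t b^(u+1) = (a^t b) b^u`, the factor `b`, `c`, `d` or `g` so produced can be moved into its slot
of the ordered monomial `g^k3 d^k2 c^k1 b^… a^…` because `b, c, d, g` commute pairwise, so
induction on `u` reduces the formula to a recurrence for the coefficients. Written as
`u^(s) t^(w) / (2^k2 6^k3 k1! k2! k3!)` with descending factorials, `s = k1 + k2 + k3` and
`w = k1 + 2 k2 + 3 k3`, that recurrence is Pascal's rule `(u+1)^(s) = u^(s) + s u^(s-1)`. -/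

namespace Nat

theorem succ_descFactorial_eq_add (u s : ℕ) :
    (u + 1).descFactorial s = u.descFactorial s + s * u.descFactorial (s - 1) := by
  cases s with
  | zero => simp
  | succ s =>
    rw [succ_descFactorial_succ, descFactorial_succ, Nat.add_sub_cancel, ← add_mul]
    rcases le_or_gt s u with h | h
    · congr 1; omega
    · simp [descFactorial_eq_zero_iff_lt.mpr h]

theorem choose_mul_factorial_mul_descFactorial (t j m : ℕ) :
    t.choose j * j ! * (t - j).descFactorial m = t.descFactorial (j + m) := by
  rw [mul_comm (t.choose j), ← descFactorial_eq_factorial_mul_choose, mul_comm,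
    ← descFactorial_mul_descFactorial (le_add_right j m), Nat.add_sub_cancel_left]

end Nat

open Finset in
theorem Finset.sum_range_succ_eq_of_shift {M : Type*} [AddCommMonoid M] {f g : ℕ → M} {n : ℕ}
    (hf : f n = 0) (hg : g 0 = 0) (hfg : ∀ i, g (i + 1) = f i) :
    ∑ i ∈ range (n + 1), f i = ∑ i ∈ range (n + 1), g i := by
  rw [sum_range_succ, hf, add_zero, sum_range_succ', hg, add_zero]
  simp only [hfg]

namespace UniversalEnvelopingAlgebra

attribute [local instance 100] LieRing.ofAssociativeRing LieAlgebra.ofAssociativeAlgebra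

variable {K : Type*} [CommRing K] {L : Type*} [LieRing L] [LieAlgebra K L]

theorem ι_mul_ι_of_lie_eq {x y z : L} (h : ⁅x, y⁆ = z) :
    ι K x * ι K y = ι K y * ι K x + ι K z := by
  rw [← h, LieHom.map_lie, Ring.lie_def, add_sub_cancel]

theorem commute_ι_of_lie_eq_zero {x y : L} (h : ⁅x, y⁆ = 0) : Commute (ι K x) (ι K y) :=
  commute_iff_lie_eq.mpr (by rw [← LieHom.map_lie, h, map_zero])

end UniversalEnvelopingAlgebra

namespace NormalOrder

open Finset

section Coefficients

open Nat

def normalOrderDenom (k1 k2 k3 : ℕ) : ℕ :=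
  (Nat.factorial 2) ^ k2 * (Nat.factorial 3) ^ k3 * k3.factorial * k2.factorial * k1.factorial

variable (K : Type*) [Field K]

def normalOrderCoeff (t u k1 k2 k3 : ℕ) : K :=
  ((u.choose (k1 + k2 + k3) * t.choose (k1 + 2 * k2 + 3 * k3)
    * (k1 + k2 + k3).factorial * (k1 + 2 * k2 + 3 * k3).factorial : ℕ) : K)
    / (normalOrderDenom k1 k2 k3 : K)

variable {K}

theorem normalOrderCoeff_eq_zero {t u k1 k2 k3 : ℕ}
    (h : ¬(k1 + k2 + k3 ≤ u ∧ k1 + 2 * k2 + 3 * k3 ≤ t)) :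
    normalOrderCoeff K t u k1 k2 k3 = 0 := by
  rw [not_and_or, not_le, not_le] at h
  rcases h with h | h <;> simp [normalOrderCoeff, choose_eq_zero_of_lt h]

variable [CharZero K]

theorem normalOrderDenom_ne_zero (k1 k2 k3 : ℕ) : (normalOrderDenom k1 k2 k3 : K) ≠ 0 :=
  Nat.cast_ne_zero.mpr (by unfold normalOrderDenom; positivity)

theorem normalOrderCoeff_mul_denom (t u k1 k2 k3 : ℕ) :
    normalOrderCoeff K t u k1 k2 k3 * normalOrderDenom k1 k2 k3
      = u.descFactorial (k1 + k2 + k3) * t.descFactorial (k1 + 2 * k2 + 3 * k3) := by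
  rw [normalOrderCoeff, div_mul_cancel₀ _ (normalOrderDenom_ne_zero k1 k2 k3),
    descFactorial_eq_factorial_mul_choose, descFactorial_eq_factorial_mul_choose]
  push_cast; ring

theorem choose_mul_normalOrderCoeff_mul_denom (t j u k1 k2 k3 : ℕ) :
    t.choose j * normalOrderCoeff K (t - j) u k1 k2 k3 * normalOrderDenom k1 k2 k3 * j !
      = u.descFactorial (k1 + k2 + k3) * t.descFactorial (j + (k1 + 2 * k2 + 3 * k3)) := by
  rw [mul_assoc (t.choose j : K), normalOrderCoeff_mul_denom,
    ← Nat.choose_mul_factorial_mul_descFactorial t j]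
  push_cast; ring

theorem normalOrderCoeff_pred₁_mul_denom (t u k1 k2 k3 : ℕ) :
    (t : K) * (if k1 = 0 then 0 else normalOrderCoeff K (t - 1) u (k1 - 1) k2 k3)
        * normalOrderDenom k1 k2 k3
      = k1 * u.descFactorial (k1 + k2 + k3 - 1) * t.descFactorial (k1 + 2 * k2 + 3 * k3) := by
  cases k1 with
  | zero => simp
  | succ i =>
    have h := choose_mul_normalOrderCoeff_mul_denom (K := K) t 1 u i k2 k3
    simp only [Nat.choose_one_right, factorial_one, cast_one, mul_one] at h
    rw [if_neg (succ_ne_zero i), Nat.add_sub_cancel,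
      show normalOrderDenom (i + 1) k2 k3 = (i + 1) * normalOrderDenom i k2 k3 by
        simp only [normalOrderDenom, factorial_succ]; ring,
      show i + 1 + k2 + k3 - 1 = i + k2 + k3 by omega,
      show i + 1 + 2 * k2 + 3 * k3 = 1 + (i + 2 * k2 + 3 * k3) by ring]
    push_cast at h ⊢; linear_combination (i + 1 : K) * h

theorem normalOrderCoeff_pred₂_mul_denom (t u k1 k2 k3 : ℕ) :
    (t.choose 2 : K) * (if k2 = 0 then 0 else normalOrderCoeff K (t - 2) u k1 (k2 - 1) k3)
        * normalOrderDenom k1 k2 k3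
      = k2 * u.descFactorial (k1 + k2 + k3 - 1) * t.descFactorial (k1 + 2 * k2 + 3 * k3) := by
  cases k2 with
  | zero => simp
  | succ i =>
    have h := choose_mul_normalOrderCoeff_mul_denom (K := K) t 2 u k1 i k3
    rw [if_neg (succ_ne_zero i), Nat.add_sub_cancel,
      show normalOrderDenom k1 (i + 1) k3 = 2 ! * (i + 1) * normalOrderDenom k1 i k3 by
        simp only [normalOrderDenom, factorial_succ, pow_succ]; ring,
      show k1 + (i + 1) + k3 - 1 = k1 + i + k3 by omega,
      show k1 + 2 * (i + 1) + 3 * k3 = 2 + (k1 + 2 * i + 3 * k3) by ring]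
    push_cast at h ⊢; linear_combination (i + 1 : K) * h

theorem normalOrderCoeff_pred₃_mul_denom (t u k1 k2 k3 : ℕ) :
    (t.choose 3 : K) * (if k3 = 0 then 0 else normalOrderCoeff K (t - 3) u k1 k2 (k3 - 1))
        * normalOrderDenom k1 k2 k3
      = k3 * u.descFactorial (k1 + k2 + k3 - 1) * t.descFactorial (k1 + 2 * k2 + 3 * k3) := by
  cases k3 with
  | zero => simp
  | succ i =>
    have h := choose_mul_normalOrderCoeff_mul_denom (K := K) t 3 u k1 k2 i
    rw [if_neg (succ_ne_zero i), Nat.add_sub_cancel,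
      show normalOrderDenom k1 k2 (i + 1) = 3 ! * (i + 1) * normalOrderDenom k1 k2 i by
        simp only [normalOrderDenom, factorial_succ, pow_succ]; ring,
      show k1 + k2 + (i + 1) - 1 = k1 + k2 + i by omega,
      show k1 + 2 * k2 + 3 * (i + 1) = 3 + (k1 + 2 * k2 + 3 * i) by ring]
    push_cast at h ⊢; linear_combination (i + 1 : K) * h

theorem normalOrderCoeff_succ_right (t u k1 k2 k3 : ℕ) :
    normalOrderCoeff K t (u + 1) k1 k2 k3
      = normalOrderCoeff K t u k1 k2 k3
        + (t : K) * (if k1 = 0 then 0 else normalOrderCoeff K (t - 1) u (k1 - 1) k2 k3)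
        + (t.choose 2 : K) *
            (if k2 = 0 then 0 else normalOrderCoeff K (t - 2) u k1 (k2 - 1) k3)
        + (t.choose 3 : K) *
            (if k3 = 0 then 0 else normalOrderCoeff K (t - 3) u k1 k2 (k3 - 1)) := by
  apply mul_right_cancel₀ (normalOrderDenom_ne_zero (K := K) k1 k2 k3)
  rw [add_mul, add_mul, add_mul, normalOrderCoeff_pred₁_mul_denom,
    normalOrderCoeff_pred₂_mul_denom, normalOrderCoeff_pred₃_mul_denom,
    normalOrderCoeff_mul_denom, normalOrderCoeff_mul_denom, Nat.succ_descFactorial_eq_add]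
  push_cast; ring

end Coefficients

section Ring

variable {A : Type*} [Ring A] (K : Type*) [Field K] [Algebra K A] {a b c d g : A}

-- `t - j + 1` and `t + 1 - j` differ only when `j > t`, where the binomial coefficient vanishes.
theorem choose_nsmul_mul_pow_sub_add_one (x : A) (t j : ℕ) :
    t.choose j • (x * a ^ (t - j + 1)) = t.choose j • (x * a ^ (t + 1 - j)) := by
  rcases le_or_gt j t with h | h
  · rw [Nat.sub_add_comm h]
  · simp [Nat.choose_eq_zero_of_lt h]

theorem pow_mul_eq_of_lie_chain (hab : a * b = b * a + c) (hac : a * c = c * a + d)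
    (had : a * d = d * a + g) (hag : Commute a g) (t : ℕ) :
    a ^ t * b = b * a ^ t + t • (c * a ^ (t - 1)) + t.choose 2 • (d * a ^ (t - 2))
      + t.choose 3 • (g * a ^ (t - 3)) := by
  induction t with
  | zero => simp
  | succ t ih =>
    have h1 := choose_nsmul_mul_pow_sub_add_one (a := a) c t 1
    rw [Nat.choose_one_right, Nat.add_sub_cancel] at h1
    have pascal₂ : (t + 1).choose 2 = t + t.choose 2 := by
      rw [Nat.choose_succ_succ', Nat.choose_one_right]
    have pascal₃ : (t + 1).choose 3 = t.choose 2 + t.choose 3 := Nat.choose_succ_succ' t 2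
    rw [pow_succ', mul_assoc, ih]
    simp only [mul_add, mul_smul_comm, ← mul_assoc, hab, hac, had, hag.eq, add_mul, smul_add]
    simp only [mul_assoc, ← pow_succ', h1, choose_nsmul_mul_pow_sub_add_one, Nat.add_sub_cancel,
      pascal₂, pascal₃, add_nsmul, one_nsmul, show t + 1 - 2 = t - 1 by omega,
      show t + 1 - 3 = t - 2 by omega]
    abel

variable (a b c d g) in
def normalMonomial (t u k1 k2 k3 : ℕ) : A :=
  g ^ k3 * d ^ k2 * c ^ k1 * b ^ (u - k1 - k2 - k3) * a ^ (t - k1 - 2 * k2 - 3 * k3)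

theorem b_mul_normalMonomial (hbc : Commute b c) (hbd : Commute b d) (hbg : Commute b g)
    {t u k1 k2 k3 : ℕ} (h : k1 + k2 + k3 ≤ u) :
    b * normalMonomial a b c d g t u k1 k2 k3 = normalMonomial a b c d g t (u + 1) k1 k2 k3 := by
  unfold normalMonomial
  rw [show u + 1 - k1 - k2 - k3 = u - k1 - k2 - k3 + 1 by omega, pow_succ',
    ← mul_assoc (g ^ k3 * d ^ k2 * c ^ k1),
    ← (((hbg.pow_right k3).mul_right (hbd.pow_right k2)).mul_right (hbc.pow_right k1)).eq]
  simp only [mul_assoc]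

theorem c_mul_normalMonomial (hcd : Commute c d) (hcg : Commute c g) (t u k1 k2 k3 : ℕ) :
    c * normalMonomial a b c d g (t - 1) u k1 k2 k3
      = normalMonomial a b c d g t (u + 1) (k1 + 1) k2 k3 := by
  unfold normalMonomial
  rw [show u + 1 - (k1 + 1) - k2 - k3 = u - k1 - k2 - k3 by omega,
    show t - (k1 + 1) - 2 * k2 - 3 * k3 = t - 1 - k1 - 2 * k2 - 3 * k3 by omega, pow_succ',
    ← mul_assoc (g ^ k3 * d ^ k2), ← ((hcg.pow_right k3).mul_right (hcd.pow_right k2)).eq]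
  simp only [mul_assoc]

theorem d_mul_normalMonomial (hdg : Commute d g) (t u k1 k2 k3 : ℕ) :
    d * normalMonomial a b c d g (t - 2) u k1 k2 k3
      = normalMonomial a b c d g t (u + 1) k1 (k2 + 1) k3 := by
  unfold normalMonomial
  rw [show u + 1 - k1 - (k2 + 1) - k3 = u - k1 - k2 - k3 by omega,
    show t - k1 - 2 * (k2 + 1) - 3 * k3 = t - 2 - k1 - 2 * k2 - 3 * k3 by omega, pow_succ',
    ← mul_assoc (g ^ k3), ← (hdg.pow_right k3).eq]
  simp only [mul_assoc]

theorem g_mul_normalMonomial (t u k1 k2 k3 : ℕ) :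
    g * normalMonomial a b c d g (t - 3) u k1 k2 k3
      = normalMonomial a b c d g t (u + 1) k1 k2 (k3 + 1) := by
  unfold normalMonomial
  rw [show u + 1 - k1 - k2 - (k3 + 1) = u - k1 - k2 - k3 by omega,
    show t - k1 - 2 * k2 - 3 * (k3 + 1) = t - 3 - k1 - 2 * k2 - 3 * k3 by omega, pow_succ']
  simp only [mul_assoc]

variable (a b c d g) in
/-- The box `range N` is allowed to be larger than needed (the coefficients vanish unless
`k1 + k2 + k3 ≤ u`), so that the index shifts in the induction on `u` stay inside it. -/
def normalOrderSum (N t u : ℕ) : A :=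
  ∑ k1 ∈ range N, ∑ k2 ∈ range N, ∑ k3 ∈ range N,
    normalOrderCoeff K t u k1 k2 k3 • normalMonomial a b c d g t u k1 k2 k3

theorem b_mul_normalOrderSum (hbc : Commute b c) (hbd : Commute b d) (hbg : Commute b g)
    (N t u : ℕ) :
    b * normalOrderSum K a b c d g N t u
      = ∑ k1 ∈ range N, ∑ k2 ∈ range N, ∑ k3 ∈ range N,
          normalOrderCoeff K t u k1 k2 k3 • normalMonomial a b c d g t (u + 1) k1 k2 k3 := by
  simp only [normalOrderSum, mul_sum, mul_smul_comm]
  refine sum_congr rfl fun k1 _ => sum_congr rfl fun k2 _ => sum_congr rfl fun k3 _ => ?_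
  by_cases h : k1 + k2 + k3 ≤ u
  · rw [b_mul_normalMonomial hbc hbd hbg h]
  · rw [normalOrderCoeff_eq_zero (by omega), zero_smul, zero_smul]

theorem c_mul_normalOrderSum (hcd : Commute c d) (hcg : Commute c g) {n u : ℕ} (hu : u < n)
    (t : ℕ) :
    c * normalOrderSum K a b c d g (n + 1) (t - 1) u
      = ∑ k1 ∈ range (n + 1), ∑ k2 ∈ range (n + 1), ∑ k3 ∈ range (n + 1),
          (if k1 = 0 then 0 else normalOrderCoeff K (t - 1) u (k1 - 1) k2 k3)
            • normalMonomial a b c d g t (u + 1) k1 k2 k3 := by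
  simp only [normalOrderSum, mul_sum, mul_smul_comm, c_mul_normalMonomial hcd hcg]
  refine Finset.sum_range_succ_eq_of_shift ?_ (by simp) (by simp)
  exact sum_eq_zero fun k2 _ => sum_eq_zero fun k3 _ => by
    rw [normalOrderCoeff_eq_zero (by omega), zero_smul]

theorem d_mul_normalOrderSum (hdg : Commute d g) {n u : ℕ} (hu : u < n) (t : ℕ) :
    d * normalOrderSum K a b c d g (n + 1) (t - 2) u
      = ∑ k1 ∈ range (n + 1), ∑ k2 ∈ range (n + 1), ∑ k3 ∈ range (n + 1),
          (if k2 = 0 then 0 else normalOrderCoeff K (t - 2) u k1 (k2 - 1) k3)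
            • normalMonomial a b c d g t (u + 1) k1 k2 k3 := by
  simp only [normalOrderSum, mul_sum, mul_smul_comm, d_mul_normalMonomial hdg]
  refine sum_congr rfl fun k1 _ => Finset.sum_range_succ_eq_of_shift ?_ (by simp) (by simp)
  exact sum_eq_zero fun k3 _ => by rw [normalOrderCoeff_eq_zero (by omega), zero_smul]

theorem g_mul_normalOrderSum {n u : ℕ} (hu : u < n) (t : ℕ) :
    g * normalOrderSum K a b c d g (n + 1) (t - 3) u
      = ∑ k1 ∈ range (n + 1), ∑ k2 ∈ range (n + 1), ∑ k3 ∈ range (n + 1),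
          (if k3 = 0 then 0 else normalOrderCoeff K (t - 3) u k1 k2 (k3 - 1))
            • normalMonomial a b c d g t (u + 1) k1 k2 k3 := by
  simp only [normalOrderSum, mul_sum, mul_smul_comm, g_mul_normalMonomial]
  refine sum_congr rfl fun k1 _ => sum_congr rfl fun k2 _ =>
    Finset.sum_range_succ_eq_of_shift ?_ (by simp) (by simp)
  rw [normalOrderCoeff_eq_zero (by omega), zero_smul]

theorem pow_eq_normalOrderSum_zero {N : ℕ} (hN : 0 < N) (t : ℕ) :
    a ^ t = normalOrderSum K a b c d g N t 0 := by
  have h0 : 0 ∈ range N := mem_range.mpr hN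
  rw [normalOrderSum, sum_eq_single_of_mem 0 h0, sum_eq_single_of_mem 0 h0,
    sum_eq_single_of_mem 0 h0]
  · simp [normalOrderCoeff, normalOrderDenom, normalMonomial]
  · intro k3 _ hk
    rw [normalOrderCoeff_eq_zero (by omega), zero_smul]
  · intro k2 _ hk
    exact sum_eq_zero fun k3 _ => by rw [normalOrderCoeff_eq_zero (by omega), zero_smul]
  · intro k1 _ hk
    exact sum_eq_zero fun k2 _ => sum_eq_zero fun k3 _ => by
      rw [normalOrderCoeff_eq_zero (by omega), zero_smul]

variable [CharZero K]

theorem pow_mul_pow_eq_normalOrderSum (hab : a * b = b * a + c) (hac : a * c = c * a + d)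
    (had : a * d = d * a + g) (hag : Commute a g) (hbc : Commute b c) (hbd : Commute b d)
    (hbg : Commute b g) (hcd : Commute c d) (hcg : Commute c g) (hdg : Commute d g)
    {N u : ℕ} (hN : u < N) (t : ℕ) :
    a ^ t * b ^ u = normalOrderSum K a b c d g N t u := by
  induction u generalizing t with
  | zero => rw [pow_zero, mul_one]; exact pow_eq_normalOrderSum_zero K hN t
  | succ u ih =>
    obtain ⟨n, rfl⟩ : ∃ n, N = n + 1 := ⟨N - 1, by omega⟩
    have hu : u < n := by omega
    rw [pow_succ', ← mul_assoc, pow_mul_eq_of_lie_chain hab hac had hag t]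
    simp only [add_mul, smul_mul_assoc, mul_assoc, ih (by omega)]
    rw [b_mul_normalOrderSum K hbc hbd hbg, c_mul_normalOrderSum K hcd hcg hu,
      d_mul_normalOrderSum K hdg hu, g_mul_normalOrderSum K hu]
    simp only [normalOrderSum, smul_sum, ← sum_add_distrib]
    refine sum_congr rfl fun k1 _ => sum_congr rfl fun k2 _ => sum_congr rfl fun k3 _ => ?_
    rw [normalOrderCoeff_succ_right]
    simp only [add_smul, ← Nat.cast_smul_eq_nsmul K, smul_smul]

end Ring

end NormalOrder

open UniversalEnvelopingAlgebra

theorem stmt_6 {K : Type*} [Field K] [CharZero K]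
    {L : Type*} [LieRing L] [LieAlgebra K L]
    (a b c d g : L)
    (hab : ⁅a, b⁆ = c) (hac : ⁅a, c⁆ = d) (had : ⁅a, d⁆ = g) (hag : ⁅a, g⁆ = 0) (hbc : ⁅b, c⁆ = 0) (hbd : ⁅b, d⁆ = 0) (hbg : ⁅b, g⁆ = 0) (hcd : ⁅c, d⁆ = 0) (hcg : ⁅c, g⁆ = 0) (hdg : ⁅d, g⁆ = 0)
    (t u : ℕ) :
    (ι K a : UniversalEnvelopingAlgebra K L) ^ (t) * (ι K b : UniversalEnvelopingAlgebra K L) ^ (u) =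
      ∑ k1 ∈ Finset.range (u + 1), ∑ k2 ∈ Finset.range (u + 1), ∑ k3 ∈ Finset.range (u + 1),
        if k1 + k2 + k3 ≤ u ∧ k1 + 2 * k2 + 3 * k3 ≤ t then
          ((((u.choose (k1 + k2 + k3) * t.choose (k1 + 2 * k2 + 3 * k3)
              * (k1 + k2 + k3).factorial * (k1 + 2 * k2 + 3 * k3).factorial : ℕ) : K))
            / (((Nat.factorial 2) ^ k2 * (Nat.factorial 3) ^ k3
                * k3.factorial * k2.factorial * k1.factorial : ℕ) : K)) •
            ((ι K g : UniversalEnvelopingAlgebra K L) ^ (k3) * (ι K d : UniversalEnvelopingAlgebra K L) ^ (k2) * (ι K c : UniversalEnvelopingAlgebra K L) ^ (k1)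
              * (ι K b : UniversalEnvelopingAlgebra K L) ^ (u - k1 - k2 - k3) * (ι K a : UniversalEnvelopingAlgebra K L) ^ (t - k1 - 2 * k2 - 3 * k3))
        else 0 := by
  rw [NormalOrder.pow_mul_pow_eq_normalOrderSum K (ι_mul_ι_of_lie_eq hab) (ι_mul_ι_of_lie_eq hac)
    (ι_mul_ι_of_lie_eq had) (commute_ι_of_lie_eq_zero hag) (commute_ι_of_lie_eq_zero hbc)
    (commute_ι_of_lie_eq_zero hbd) (commute_ι_of_lie_eq_zero hbg) (commute_ι_of_lie_eq_zero hcd)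
    (commute_ι_of_lie_eq_zero hcg) (commute_ι_of_lie_eq_zero hdg) (Nat.lt_succ_self u) t,
    NormalOrder.normalOrderSum]
  refine Finset.sum_congr rfl fun k1 _ => Finset.sum_congr rfl fun k2 _ =>
    Finset.sum_congr rfl fun k3 _ => ?_
  split_ifs with h
  · rfl
  · rw [NormalOrder.normalOrderCoeff_eq_zero h, zero_smul]
end

section
/- Let L be a Lie algebra over a field of characteristic zero with elements x_1, x_2, x_3, x_4, x_5 such that [x_4,x_2] = -x_1 and [x_5,x_3] = -x_1, and all other brackets among x_1, ..., x_5 are 0 (the Lie algebra 𝔫_{5,3}). Then for all nonnegative integers j, k, l, m, n, p, q, r, s, t, in the universal enveloping algebra U(L) one has (x_1^j x_2^k x_3^l x_4^m x_5^n)(x_1^p x_2^q x_3^r x_4^s x_5^t) = \sum_{\alpha=0}^{\min\{n,r\}} \sum_{\beta=0}^{\min\{m,q\}} \binom{n}{\alpha} \binom{r}{\alpha} \binom{m}{\beta} \binom{q}{\beta} \alpha! \beta! (-1)^{\alpha+\beta} \, x_1^{j+p+\alpha+\beta} x_2^{k+q-\beta} x_3^{l+r-\alpha} x_4^{m+s-\beta}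 x_5^{n+t-\alpha}. -/
/-!
Write `a, b, c, d, e` for the images of `x₁, …, x₅` in `U(L)`. Then `a` commutes with the other
four, each of `b, d` commutes with each of `c, e`, and `d b = b d - a`, `e c = c e - a`. Hence the
product of two ordered monomials is `a ^ (j + p)` times a word in `b, d` times a word in `c, e`, and
each word is put in order by the Weyl-algebra identity
`d ^ m b ^ q = ∑ᵢ C(m, i) q (q - 1) ⋯ (q - i + 1) b ^ (q - i) z ^ i d ^ (m - i)`,
valid whenever `d b = b d + z` with `z` commuting with `b` and `d`. It follows by induction on `m`
from `d b ^ u = b ^ u d + u b ^ (u - 1) z` and Pascal's rule. With `z = -a` the signs appear.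
-/

open Finset UniversalEnvelopingAlgebra

section Weyl

variable {R : Type*} [Ring R] {b d z : R}

theorem mul_pow_eq_of_mul_eq_mul_add (hdb : d * b = b * d + z) (hzb : Commute z b) (u : ℕ) :
    d * b ^ u = b ^ u * d + u • (b ^ (u - 1) * z) := by
  induction u with
  | zero => simp
  | succ u ih =>
    rw [pow_succ, ← mul_assoc, ih, add_mul, mul_assoc, hdb, mul_add, ← mul_assoc, ← pow_succ,
      smul_mul_assoc, mul_assoc, hzb.eq, ← mul_assoc, add_assoc, Nat.add_sub_cancel, succ_nsmul']
    congr 2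
    cases u <;> simp [pow_succ]

theorem pow_mul_pow_eq_sum_of_mul_eq_mul_add (hdb : d * b = b * d + z) (hzb : Commute z b)
    (hzd : Commute z d) (m q : ℕ) :
    d ^ m * b ^ q =
      ∑ i ∈ range (m + 1),
        m.choose i • q.descFactorial i • (b ^ (q - i) * z ^ i * d ^ (m - i)) := by
  set f : ℕ → ℕ → R := fun i j ↦ q.descFactorial i • (b ^ (q - i) * z ^ i * d ^ j)
  have step (i j : ℕ) : d * f i j = f i (j + 1) + f (i + 1) j := by
    have hd : b ^ (q - i) * d * z ^ i * d ^ j = b ^ (q - i) * z ^ i * d ^ (j + 1) := by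
      rw [mul_assoc _ d, ((hzd.pow_left i).eq).symm, pow_succ', ← mul_assoc, ← mul_assoc]
    have hz : b ^ (q - i - 1) * z * z ^ i * d ^ j = b ^ (q - (i + 1)) * z ^ (i + 1) * d ^ j := by
      rw [mul_assoc _ z, ← pow_succ', Nat.sub_sub]
    simp only [f, mul_smul_comm, ← mul_assoc, mul_pow_eq_of_mul_eq_mul_add hdb hzb, add_mul,
      smul_mul_assoc, hd, hz, smul_add, smul_smul, Nat.descFactorial_succ, mul_comm]
  induction m with
  | zero => simp
  | succ m ih =>
    change _ = ∑ i ∈ range (m + 2), (m + 1).choose i • f i (m + 1 - i)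
    rw [sum_choose_succ_nsmul, pow_succ', mul_assoc, ih, mul_sum, ← sum_add_distrib]
    refine sum_congr rfl fun i hi ↦ ?_
    rw [mul_smul_comm, step, smul_add, Nat.sub_add_comm (mem_range_succ_iff.mp hi)]

theorem pow_mul_pow_mul_pow_mul_pow_eq_sum_of_mul_eq_mul_add (hdb : d * b = b * d + z)
    (hzb : Commute z b) (hzd : Commute z d) (k m q s : ℕ) :
    b ^ k * d ^ m * (b ^ q * d ^ s) =
      ∑ i ∈ range (min m q + 1),
        (m.choose i * q.choose i * i.factorial) •
          (z ^ i * (b ^ (k + q - i) * d ^ (m + s - i))) := by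
  have hsub : range (min m q + 1) ⊆ range (m + 1) := range_subset_range.mpr (by omega)
  rw [mul_assoc, ← mul_assoc (d ^ m), pow_mul_pow_eq_sum_of_mul_eq_mul_add hdb hzb hzd, sum_mul,
    mul_sum, ← sum_subset hsub]
  · refine sum_congr rfl fun i hi ↦ ?_
    have hi' := mem_range_succ_iff.mp hi
    have hiq : i ≤ q := by omega
    have him : i ≤ m := by omega
    rw [Nat.add_sub_assoc hiq, Nat.sub_add_comm him, pow_add, pow_add, smul_smul,
      Nat.descFactorial_eq_factorial_mul_choose, smul_mul_assoc, mul_smul_comm]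
    congr 1
    · ring
    · simp only [mul_assoc]
      rw [← (hzb.pow_pow i (q - i)).left_comm, ← (hzb.pow_pow i k).left_comm]
  · intro i him hiq
    rw [mem_range_succ_iff] at him
    rw [mem_range_succ_iff, not_le] at hiq
    rw [Nat.descFactorial_eq_zero_iff_lt.mpr (by omega)]
    simp

end Weyl

structure N53Relations {A : Type*} [Ring A] (a b c d e : A) : Prop where
  commute_ab : Commute a b
  commute_ac : Commute a c
  commute_ad : Commute a d
  commute_ae : Commute a e
  commute_bc : Commute b c
  commute_be : Commute b e
  commute_cd : Commute c d
  commute_de : Commute d e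
  d_mul_b : d * b = b * d - a
  e_mul_c : e * c = c * e - a

namespace N53Relations

variable {A : Type*} [Ring A] {a b c d e : A}

theorem commute_pow_mul_pow_left (h : N53Relations a b c d e) (i j l : ℕ) :
    Commute (a ^ i) (b ^ j * d ^ l) :=
  (h.commute_ab.pow_pow i j).mul_right (h.commute_ad.pow_pow i l)

theorem commute_pow_mul_pow_right (h : N53Relations a b c d e) (i k m : ℕ) :
    Commute (a ^ i) (c ^ k * e ^ m) :=
  (h.commute_ac.pow_pow i k).mul_right (h.commute_ae.pow_pow i m)

theorem commute_pow_mul_pow (h : N53Relations a b c d e) (j l k m : ℕ) :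
    Commute (b ^ j * d ^ l) (c ^ k * e ^ m) :=
  ((h.commute_bc.pow_pow j k).mul_right (h.commute_be.pow_pow j m)).mul_left
    ((h.commute_cd.symm.pow_pow l k).mul_right (h.commute_de.pow_pow l m))

theorem monomial_eq_mul_mul (h : N53Relations a b c d e) (i j k l m : ℕ) :
    a ^ i * b ^ j * c ^ k * d ^ l * e ^ m = a ^ i * (b ^ j * d ^ l) * (c ^ k * e ^ m) := by
  simp only [mul_assoc]
  rw [← (h.commute_cd.symm.pow_pow l k).left_comm]

theorem monomial_mul_monomial_eq_mul_mul (h : N53Relations a b c d e) (j k l m n p q r s t : ℕ) :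
    a ^ j * b ^ k * c ^ l * d ^ m * e ^ n * (a ^ p * b ^ q * c ^ r * d ^ s * e ^ t) =
      a ^ (j + p) * (b ^ k * d ^ m * (b ^ q * d ^ s)) * (c ^ l * e ^ n * (c ^ r * e ^ t)) := by
  have hB := h.commute_pow_mul_pow_left p k m
  have hC := h.commute_pow_mul_pow_right p l n
  have hBC := (h.commute_pow_mul_pow q s l n).symm
  rw [h.monomial_eq_mul_mul, h.monomial_eq_mul_mul]
  generalize b ^ k * d ^ m = B₁ at hB ⊢
  generalize c ^ l * e ^ n = C₁ at hC hBC ⊢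
  generalize b ^ q * d ^ s = B₂ at hBC ⊢
  simp only [mul_assoc, pow_add]
  rw [← hC.left_comm, ← hB.left_comm, hBC.left_comm]

theorem mul_neg_pow_mul_mul_neg_pow_mul (K : Type*) [CommRing K] [Algebra K A]
    (h : N53Relations a b c d e) (i α β u v x y : ℕ) :
    a ^ i * ((-a) ^ β * (b ^ u * d ^ x)) * ((-a) ^ α * (c ^ v * e ^ y)) =
      (-1 : K) ^ (α + β) • (a ^ (i + α + β) * b ^ u * c ^ v * d ^ x * e ^ y) := by
  have hneg (w : ℕ) : (-a) ^ w = (-1 : K) ^ w • a ^ w := by rw [← neg_one_smul K a, smul_pow]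
  simp only [hneg, smul_mul_assoc, mul_smul_comm, smul_smul, ← pow_add, mul_assoc]
  rw [← (h.commute_ad.pow_pow α x).left_comm, ← (h.commute_ab.pow_pow α u).left_comm,
    ← (h.commute_cd.symm.pow_pow x v).left_comm]
  simp only [← mul_assoc, ← pow_add, add_assoc, add_comm β α]

theorem monomial_mul_monomial {K : Type*} [CommRing K] [Algebra K A]
    (h : N53Relations a b c d e) (j k l m n p q r s t : ℕ) :
    a ^ j * b ^ k * c ^ l * d ^ m * e ^ n * (a ^ p * b ^ q * c ^ r * d ^ s * e ^ t) =
      ∑ α ∈ range (min n r + 1), ∑ β ∈ range (min m q + 1),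
        ((-1 : K) ^ (α + β) *
          ((n.choose α * r.choose α * m.choose β * q.choose β * α.factorial * β.factorial : ℕ) :
            K)) •
          (a ^ (j + p + α + β) * b ^ (k + q - β) * c ^ (l + r - α) * d ^ (m + s - β) *
            e ^ (n + t - α)) := by
  have hdb : d * b = b * d + -a := by rw [h.d_mul_b, sub_eq_add_neg]
  have hec : e * c = c * e + -a := by rw [h.e_mul_c, sub_eq_add_neg]
  rw [h.monomial_mul_monomial_eq_mul_mul,
    pow_mul_pow_mul_pow_mul_pow_eq_sum_of_mul_eq_mul_add hdb h.commute_ab.neg_left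
      h.commute_ad.neg_left,
    pow_mul_pow_mul_pow_mul_pow_eq_sum_of_mul_eq_mul_add hec h.commute_ac.neg_left
      h.commute_ae.neg_left]
  simp only [mul_sum, sum_mul]
  refine sum_congr rfl fun α _ ↦ sum_congr rfl fun β _ ↦ ?_
  simp only [mul_smul_comm, smul_mul_assoc, ← Nat.cast_smul_eq_nsmul K, smul_smul]
  rw [h.mul_neg_pow_mul_mul_neg_pow_mul K, smul_smul]
  congr 1
  push_cast
  ring

end N53Relations

section

attribute [local instance] LieRing.ofAssociativeRing

theorem UniversalEnvelopingAlgebra.ι_mul_ι (R : Type*) [CommRing R] {L : Type*} [LieRing L]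
    [LieAlgebra R L] (x y : L) :
    ι R x * ι R y = ι R y * ι R x + ι R ⁅x, y⁆ := by
  rw [(ι R (L := L)).map_lie, Ring.lie_def, add_sub_cancel]

theorem UniversalEnvelopingAlgebra.commute_ι_of_lie_eq_zero_s13 (R : Type*) [CommRing R] {L : Type*}
    [LieRing L] [LieAlgebra R L] {x y : L} (h : ⁅x, y⁆ = 0) : Commute (ι R x) (ι R y) := by
  rw [Commute, SemiconjBy, ι_mul_ι, h, map_zero, add_zero]

end

theorem stmt_13_general {K : Type*} [Field K]
    {L : Type*} [LieRing L] [LieAlgebra K L]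
    (x1 x2 x3 x4 x5 : L)
    (h42 : ⁅x4, x2⁆ = -x1) (h53 : ⁅x5, x3⁆ = -x1)
    (h12 : ⁅x1, x2⁆ = 0) (h13 : ⁅x1, x3⁆ = 0) (h14 : ⁅x1, x4⁆ = 0) (h15 : ⁅x1, x5⁆ = 0)
    (h23 : ⁅x2, x3⁆ = 0) (h25 : ⁅x2, x5⁆ = 0) (h34 : ⁅x3, x4⁆ = 0) (h45 : ⁅x4, x5⁆ = 0)
    (j k l m n p q r s t : ℕ) :
    ((ι K x1 : UniversalEnvelopingAlgebra K L) ^ (j) * (ι K x2 : UniversalEnvelopingAlgebra K L) ^ (k) * (ι K x3 : UniversalEnvelopingAlgebra K L) ^ (l) * (ι K x4 : UniversalEnvelopingAlgebra K L) ^ (m) * (ι K x5 : UniversalEnvelopingAlgebra K L) ^ (n))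
      * ((ι K x1 : UniversalEnvelopingAlgebra K L) ^ (p) * (ι K x2 : UniversalEnvelopingAlgebra K L) ^ (q) * (ι K x3 : UniversalEnvelopingAlgebra K L) ^ (r) * (ι K x4 : UniversalEnvelopingAlgebra K L) ^ (s) * (ι K x5 : UniversalEnvelopingAlgebra K L) ^ (t)) =
      ∑ α ∈ Finset.range (min n r + 1), ∑ β ∈ Finset.range (min m q + 1),
        ((-1 : K) ^ (α + β) *
          ((n.choose α * r.choose α * m.choose β * q.choose β
            * α.factorial * β.factorial : ℕ) : K)) •
          ((ι K x1 : UniversalEnvelopingAlgebra K L) ^ (j + p + α + β) * (ι K x2 : UniversalEnvelopingAlgebra K L) ^ (k + q - β) * (ι K x3 : UniversalEnvelopingAlgebra K L) ^ (l + r - α)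
            * (ι K x4 : UniversalEnvelopingAlgebra K L) ^ (m + s - β) * (ι K x5 : UniversalEnvelopingAlgebra K L) ^ (n + t - α)) := by
  have hsub {x y z : L} (h : ⁅x, y⁆ = -z) : ι K x * ι K y = ι K y * ι K x - ι K z := by
    rw [ι_mul_ι, h, map_neg, sub_eq_add_neg]
  exact N53Relations.monomial_mul_monomial
    ⟨commute_ι_of_lie_eq_zero_s13 K h12, commute_ι_of_lie_eq_zero_s13 K h13,
      commute_ι_of_lie_eq_zero_s13 K h14, commute_ι_of_lie_eq_zero_s13 K h15,
      commute_ι_of_lie_eq_zero_s13 K h23, commute_ι_of_lie_eq_zero_s13 K h25,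
      commute_ι_of_lie_eq_zero_s13 K h34, commute_ι_of_lie_eq_zero_s13 K h45, hsub h42, hsub h53⟩
    j k l m n p q r s t

theorem stmt_13 {K : Type*} [Field K] [CharZero K]
    {L : Type*} [LieRing L] [LieAlgebra K L]
    (x1 x2 x3 x4 x5 : L)
    (h42 : ⁅x4, x2⁆ = -x1) (h53 : ⁅x5, x3⁆ = -x1)
    (h12 : ⁅x1, x2⁆ = 0) (h13 : ⁅x1, x3⁆ = 0) (h14 : ⁅x1, x4⁆ = 0) (h15 : ⁅x1, x5⁆ = 0)
    (h23 : ⁅x2, x3⁆ = 0) (h25 : ⁅x2, x5⁆ = 0) (h34 : ⁅x3, x4⁆ = 0) (h45 : ⁅x4, x5⁆ = 0)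
    (j k l m n p q r s t : ℕ) :
    ((ι K x1 : UniversalEnvelopingAlgebra K L) ^ (j) * (ι K x2 : UniversalEnvelopingAlgebra K L) ^ (k) * (ι K x3 : UniversalEnvelopingAlgebra K L) ^ (l) * (ι K x4 : UniversalEnvelopingAlgebra K L) ^ (m) * (ι K x5 : UniversalEnvelopingAlgebra K L) ^ (n))
      * ((ι K x1 : UniversalEnvelopingAlgebra K L) ^ (p) * (ι K x2 : UniversalEnvelopingAlgebra K L) ^ (q) * (ι K x3 : UniversalEnvelopingAlgebra K L) ^ (r) * (ι K x4 : UniversalEnvelopingAlgebra K L) ^ (s) * (ι K x5 : UniversalEnvelopingAlgebra K L) ^ (t)) =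
      ∑ α ∈ Finset.range (min n r + 1), ∑ β ∈ Finset.range (min m q + 1),
        ((-1 : K) ^ (α + β) *
          ((n.choose α * r.choose α * m.choose β * q.choose β
            * α.factorial * β.factorial : ℕ) : K)) •
          ((ι K x1 : UniversalEnvelopingAlgebra K L) ^ (j + p + α + β) * (ι K x2 : UniversalEnvelopingAlgebra K L) ^ (k + q - β) * (ι K x3 : UniversalEnvelopingAlgebra K L) ^ (l + r - α)
            * (ι K x4 : UniversalEnvelopingAlgebra K L) ^ (m + s - β) * (ι K x5 : UniversalEnvelopingAlgebra K L) ^ (n + t - α)) :=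
  stmt_13_general x1 x2 x3 x4 x5 h42 h53 h12 h13 h14 h15 h23 h25 h34 h45 j k l m n p q r s t
end
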